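/- arXiv:0911.4724 — 2 statements merged into one kernel-verified Lean document; each statement's English description precedes it below -/
import Mathlib

section
/- For a quadratic Boolean function f(x) = xQxᵗ + Lxᵗ with B = Q + Qᵗ of rank 2h, the Fourier coefficient f̂(w) is nonzero for exactly 2^{2h} values of w, and each nonzero coefficient has absolute value 2^{-h}. -/
open Finset Matrix
open scoped Classical

/-- Fourier coefficient of the Boolean function `f` at frequency `w`. -/
noncomputable def fhat {n : ℕ} (f : (Fin n → ZMod 2) → ZMod 2) (w : Fin n → ZMod 2) : ℝ :=
  (2 ^ n : ℝ)⁻¹ * ∑ x : Fin n → ZMod 2, (-1 : ℝ) ^ ((w ⬝ᵥ x + f x).val)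

/-!
The polar form of `q x = x Q xᵗ + L xᵗ` is the bilinear form `x B zᵗ` with `B = Q + Qᵀ`.
Writing the square of an exponential sum `∑ₓ (-1)^(q x)` as `∑ₓ ∑_z (-1)^(q x + q (x + z))`,
the polar identity reduces the exponent to `q z + x B zᵗ`, and summing over `x` kills every
`z ∉ ker B`. On `ker B` the function `q` is additive, so its character sum is `0` or `|ker B|`.
Hence `f̂(w)² ∈ {0, 2^(-rank B)}` for every `w`, and Parseval `∑_w f̂(w)² = 1` counts the
nonzero coefficients.
-/

noncomputable def signChar : AddChar (ZMod 2) ℝ where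
  toFun a := (-1) ^ a.val
  map_zero_eq_one' := by simp
  map_add_eq_mul' a b := by
    rw [ZMod.val_add, ← pow_add, neg_one_pow_eq_pow_mod_two (n := a.val + b.val)]

lemma signChar_eq_one_iff (a : ZMod 2) : signChar a = 1 ↔ a = 0 := by
  rw [← ZMod.val_eq_zero]
  show (-1 : ℝ) ^ a.val = 1 ↔ _
  have := ZMod.val_lt a
  interval_cases a.val <;> norm_num

lemma fhat_eq_sum_signChar {n : ℕ} (f : (Fin n → ZMod 2) → ZMod 2) (w : Fin n → ZMod 2) :
    fhat f w = (2 ^ n : ℝ)⁻¹ * ∑ x, signChar (w ⬝ᵥ x + f x) := rfl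

lemma sum_signChar_addMonoidHom {G : Type*} [AddGroup G] [Fintype G] (φ : G →+ ZMod 2) :
    ∑ g, signChar (φ g) = if φ = 0 then (Fintype.card G : ℝ) else 0 := by
  have hψ : signChar.compAddMonoidHom φ = 0 ↔ φ = 0 := by
    rw [AddChar.eq_zero_iff, DFunLike.ext_iff]
    simp only [AddChar.compAddMonoidHom_apply, signChar_eq_one_iff, AddMonoidHom.zero_apply]
  refine (AddChar.sum_eq_ite (signChar.compAddMonoidHom φ)).trans ?_
  simp only [hψ]

variable {ι : Type*} [Fintype ι]

lemma sum_signChar_dotProduct [DecidableEq ι] (v : ι → ZMod 2) :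
    ∑ x : ι → ZMod 2, signChar (x ⬝ᵥ v) = if v = 0 then 2 ^ Fintype.card ι else 0 := by
  let φ : (ι → ZMod 2) →+ ZMod 2 := AddMonoidHom.mk' (· ⬝ᵥ v) fun x y => add_dotProduct x y v
  have hφ : φ = 0 ↔ v = 0 := by
    refine ⟨fun h => funext fun i => ?_, fun h => by ext; simp [φ, h]⟩
    simpa [φ] using DFunLike.congr_fun h (Pi.single i 1)
  have := sum_signChar_addMonoidHom φ
  simp only [hφ, Fintype.card_fun, ZMod.card] at this
  exact_mod_cast this

lemma sq_sum_eq_sum_sum_add {V : Type*} [AddGroup V] [Fintype V] (F : V → ℝ) :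
    (∑ x, F x) ^ 2 = ∑ x, ∑ z, F x * F (x + z) := by
  rw [sq, Finset.sum_mul_sum]
  exact Finset.sum_congr rfl fun x _ =>
    (Fintype.sum_equiv (Equiv.addLeft x) _ _ fun _ => rfl).symm

lemma card_ker_mulVecLin_mul_pow_rank {m n K : Type*} [Fintype m] [Fintype n] [Field K]
    [Fintype K] (B : Matrix m n K) :
    Fintype.card (LinearMap.ker B.mulVecLin) * Fintype.card K ^ B.rank
      = Fintype.card K ^ Fintype.card n := by
  have hrn := LinearMap.finrank_range_add_finrank_ker B.mulVecLin
  rw [Module.finrank_fintype_fun_eq_card] at hrn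
  rw [Module.card_eq_pow_finrank (K := K) (V := LinearMap.ker B.mulVecLin), Matrix.rank,
    ← pow_add, ← hrn, add_comm]

def HasPolarForm (q : (ι → ZMod 2) → ZMod 2) (B : Matrix ι ι (ZMod 2)) : Prop :=
  ∀ x z, q (x + z) = q x + q z + x ⬝ᵥ B *ᵥ z

lemma hasPolarForm_quadratic (Q : Matrix ι ι (ZMod 2)) (L : ι → ZMod 2) :
    HasPolarForm (fun x => x ⬝ᵥ Q *ᵥ x + L ⬝ᵥ x) (Q + Qᵀ) := by
  intro x z
  have hzx : z ⬝ᵥ Q *ᵥ x = x ⬝ᵥ Qᵀ *ᵥ z := by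
    rw [mulVec_transpose, dotProduct_mulVec, dotProduct_comm]
  simp only [mulVec_add, add_mulVec, dotProduct_add, add_dotProduct, hzx]
  ring

namespace HasPolarForm

variable {q : (ι → ZMod 2) → ZMod 2} {B : Matrix ι ι (ZMod 2)}

lemma dotProduct_add (hq : HasPolarForm q B) (w : ι → ZMod 2) :
    HasPolarForm (fun x => w ⬝ᵥ x + q x) B := by
  intro x z
  simp only [hq x z, _root_.dotProduct_add]
  ring

lemma sq_sum_signChar [DecidableEq ι] (hq : HasPolarForm q B) :
    (∑ x, signChar (q x)) ^ 2
      = 2 ^ Fintype.card ι * ∑ z : LinearMap.ker B.mulVecLin, signChar (q z) := by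
  have hshift : ∀ x z, signChar (q x) * signChar (q (x + z))
      = signChar (q z) * signChar (x ⬝ᵥ B *ᵥ z) := by
    intro x z
    rw [← AddChar.map_add_eq_mul, ← AddChar.map_add_eq_mul, hq, ← add_assoc, ← add_assoc,
      CharTwo.add_self_eq_zero, zero_add]
  calc (∑ x, signChar (q x)) ^ 2
      = ∑ z, signChar (q z) * ∑ x, signChar (x ⬝ᵥ B *ᵥ z) := by
        simp only [sq_sum_eq_sum_sum_add, hshift, Finset.mul_sum]
        exact Finset.sum_comm
    _ = 2 ^ Fintype.card ι * ∑ z : LinearMap.ker B.mulVecLin, signChar (q z) := by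
        simp only [sum_signChar_dotProduct, mul_ite, mul_zero, ← Finset.sum_filter,
          Finset.mul_sum]
        rw [Finset.sum_subtype (p := (· ∈ LinearMap.ker B.mulVecLin)) (F := inferInstance) _
          fun z => by simp]
        simp only [mul_comm]

lemma sum_ker_signChar_eq_zero_or_card [DecidableEq ι] (hq : HasPolarForm q B) :
    ∑ z : LinearMap.ker B.mulVecLin, signChar (q z) = 0 ∨
      ∑ z : LinearMap.ker B.mulVecLin, signChar (q z)
        = Fintype.card (LinearMap.ker B.mulVecLin) := by
  let φ : LinearMap.ker B.mulVecLin →+ ZMod 2 := AddMonoidHom.mk' (fun z => q z) fun z z' => by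
    rw [Submodule.coe_add, hq, show B *ᵥ z' = 0 from z'.2, dotProduct_zero, add_zero]
  have := sum_signChar_addMonoidHom φ
  split_ifs at this
  · exact Or.inr this
  · exact Or.inl this

end HasPolarForm

lemma HasPolarForm.fhat_sq_eq_zero_or {n : ℕ} {f : (Fin n → ZMod 2) → ZMod 2}
    {B : Matrix (Fin n) (Fin n) (ZMod 2)} (hf : HasPolarForm f B) (w : Fin n → ZMod 2) :
    fhat f w ^ 2 = 0 ∨ fhat f w ^ 2 = ((2 : ℝ) ^ B.rank)⁻¹ := by
  have hcard : (Fintype.card (LinearMap.ker B.mulVecLin) : ℝ) * 2 ^ B.rank = 2 ^ n := by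
    exact_mod_cast (by simpa using card_ker_mulVecLin_mul_pow_rank B)
  have hsq := (hf.dotProduct_add w).sq_sum_signChar
  simp only [Fintype.card_fin] at hsq
  rw [fhat_eq_sum_signChar, mul_pow, hsq]
  rcases (hf.dotProduct_add w).sum_ker_signChar_eq_zero_or_card with h | h
  · simp [h]
  · right
    rw [h, ← hcard]
    field_simp

lemma sum_fhat_sq {n : ℕ} (f : (Fin n → ZMod 2) → ZMod 2) : ∑ w, fhat f w ^ 2 = 1 := by
  have hshift : ∀ w x z : Fin n → ZMod 2,
      signChar (w ⬝ᵥ x + f x) * signChar (w ⬝ᵥ (x + z) + f (x + z))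
        = signChar (w ⬝ᵥ z) * signChar (f x + f (x + z)) := by
    intro w x z
    rw [← AddChar.map_add_eq_mul, ← AddChar.map_add_eq_mul, dotProduct_add]
    congr 1
    linear_combination (w ⬝ᵥ x) * CharTwo.two_eq_zero (R := ZMod 2)
  calc ∑ w, fhat f w ^ 2
      = ((2 : ℝ) ^ n)⁻¹ ^ 2 * ∑ w, (∑ x, signChar (w ⬝ᵥ x + f x)) ^ 2 := by
        rw [Finset.mul_sum]
        exact Finset.sum_congr rfl fun w _ => by rw [fhat_eq_sum_signChar, mul_pow]
    _ = ((2 : ℝ) ^ n)⁻¹ ^ 2 * ∑ w, ∑ x, ∑ z, signChar (w ⬝ᵥ z) * signChar (f x + f (x + z)) := by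
        simp only [sq_sum_eq_sum_sum_add, hshift]
    _ = ((2 : ℝ) ^ n)⁻¹ ^ 2 * ∑ x, ∑ z, signChar (f x + f (x + z)) * ∑ w, signChar (w ⬝ᵥ z) := by
        rw [Finset.sum_comm]
        refine congrArg _ (Finset.sum_congr rfl fun x _ => ?_)
        rw [Finset.sum_comm]
        simp only [Finset.mul_sum, mul_comm]
    _ = 1 := by
        simp only [sum_signChar_dotProduct, mul_ite, mul_zero, Finset.sum_ite_eq', Finset.mem_univ,
          if_true, add_zero, CharTwo.add_self_eq_zero, AddChar.map_zero_eq_one, Fintype.card_fin]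
        simp only [inv_pow, one_mul, sum_const, card_univ, Fintype.card_pi, ZMod.card, prod_const,
          Fintype.card_fin, nsmul_eq_mul, Nat.cast_pow, Nat.cast_ofNat]
        field_simp

lemma card_support_fhat_mul_eq_one {n : ℕ} (f : (Fin n → ZMod 2) → ZMod 2) {c : ℝ}
    (hc : ∀ w, fhat f w ≠ 0 → fhat f w ^ 2 = c) :
    ((Finset.univ.filter fun w => fhat f w ≠ 0).card : ℝ) * c = 1 := by
  rw [← sum_fhat_sq f, ← Finset.sum_filter_of_ne fun w _ hw => by simpa using hw,
    Finset.sum_congr rfl fun w hw => hc w (Finset.mem_filter.1 hw).2, Finset.sum_const,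
    nsmul_eq_mul]

theorem quadratic_fourier_support_general (n h : ℕ) (Q : Matrix (Fin n) (Fin n) (ZMod 2))
    (L : Fin n → ZMod 2) (hrank : (Q + Qᵀ).rank = 2 * h) :
    (Finset.univ.filter
        (fun w => fhat (fun x => x ⬝ᵥ Q.mulVec x + L ⬝ᵥ x) w ≠ 0)).card = 2 ^ (2 * h) ∧
    ∀ w, fhat (fun x => x ⬝ᵥ Q.mulVec x + L ⬝ᵥ x) w ≠ 0 →
      |fhat (fun x => x ⬝ᵥ Q.mulVec x + L ⬝ᵥ x) w| = ((2 : ℝ) ^ h)⁻¹ := by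
  have hval : ∀ w, fhat (fun x => x ⬝ᵥ Q *ᵥ x + L ⬝ᵥ x) w ≠ 0 →
      fhat (fun x => x ⬝ᵥ Q *ᵥ x + L ⬝ᵥ x) w ^ 2 = ((2 : ℝ) ^ (2 * h))⁻¹ := fun w hw => by
    rw [← hrank]
    exact ((hasPolarForm_quadratic Q L).fhat_sq_eq_zero_or w).resolve_left (pow_ne_zero 2 hw)
  refine ⟨?_, fun w hw => ?_⟩
  · have hcard := card_support_fhat_mul_eq_one _ hval
    rw [mul_inv_eq_one₀ (by positivity)] at hcard
    exact_mod_cast hcard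
  · rw [← sq_eq_sq₀ (abs_nonneg _) (by positivity), sq_abs, hval w hw, inv_pow, ← pow_mul,
      mul_comm]

/-- For a quadratic Boolean function whose symplectic matrix `B = Q + Qᵗ` has rank `2h`,
exactly `2^(2h)` Fourier coefficients are nonzero and each of them has absolute
value `2^(-h)`. -/
theorem quadratic_fourier_support (n h : ℕ) (Q : Matrix (Fin n) (Fin n) (ZMod 2))
    (L : Fin n → ZMod 2) (hQ : ∀ i j : Fin n, j ≤ i → Q i j = 0)
    (hrank : (Q + Qᵀ).rank = 2 * h) :
    (Finset.univ.filter
        (fun w => fhat (fun x => x ⬝ᵥ Q.mulVec x + L ⬝ᵥ x) w ≠ 0)).card = 2 ^ (2 * h) ∧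
    ∀ w, fhat (fun x => x ⬝ᵥ Q.mulVec x + L ⬝ᵥ x) w ≠ 0 →
      |fhat (fun x => x ⬝ᵥ Q.mulVec x + L ⬝ᵥ x) w| = ((2 : ℝ) ^ h)⁻¹ :=
  quadratic_fourier_support_general n h Q L hrank
end

section
/- Hidden shift algorithm correctness for bent functions: if f: Z_2^n → Z_2 is bent with dual f̃, and g(x) = f(x+s), then the state H^{⊗n}·D_{f̃}·H^{⊗n}·|ψ_g⟩, where |ψ_g⟩ = 2^{-n/2} Σ_x (-1)^{g(x)}|x⟩ and D_{f̃}|w⟩ = (-1)^{f̃(w)}|w⟩, equals ±|s⟩. -/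
open Finset Matrix

/-- The Hadamard transform `H^{⊗n}` acting on vectors indexed by `Z_2^n`. -/
noncomputable def hadamard {n : ℕ} (v : (Fin n → ZMod 2) → ℝ) :
    (Fin n → ZMod 2) → ℝ :=
  fun w => (Real.sqrt 2 ^ n)⁻¹ * ∑ x : Fin n → ZMod 2, (-1 : ℝ) ^ ((w ⬝ᵥ x).val) * v x

/-- The diagonal phase operator `D_{f̃} : |w⟩ ↦ (-1)^(f̃ w) |w⟩`. -/
def phaseOp {n : ℕ} (ft : (Fin n → ZMod 2) → ZMod 2) (v : (Fin n → ZMod 2) → ℝ) :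
    (Fin n → ZMod 2) → ℝ :=
  fun w => (-1 : ℝ) ^ ((ft w).val) * v w

/-!
Under the Hadamard transform, translating by `s` becomes multiplication by the character
`(-1)^(w ⬝ s)`, and `H^{⊗n}` maps the sign vector `2^(-n/2) (-1)^f` to `f̂`; so the first
transform produces `(-1)^(w ⬝ s) f̂(w)`. Duality, `f̂(w) = 2^(-n/2) (-1)^(f̃ w)`, gives
`(-1)^(f̃ w) f̂(w) = 2^(-n/2)`, hence `D_{f̃}` leaves the normalised character
`2^(-n/2) (-1)^(w ⬝ s)`, whose Hadamard transform is `|s⟩` by orthogonality of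
characters; the sign is always `+1`.
-/

lemma ZMod.neg_one_pow_val_add {R : Type*} [Ring R] (a b : ZMod 2) :
    (-1 : R) ^ (a + b).val = (-1) ^ a.val * (-1) ^ b.val := by
  rw [ZMod.val_add, ← neg_one_pow_eq_pow_mod_two, pow_add]

lemma neg_one_pow_mul_neg_one_pow_self {R : Type*} [Monoid R] [HasDistribNeg R] (k : ℕ) :
    (-1 : R) ^ k * (-1) ^ k = 1 := by
  rw [← pow_add, ← two_mul, pow_mul, neg_one_sq, one_pow]

lemma inv_sqrt_two_pow_mul_self (n : ℕ) :
    (Real.sqrt 2 ^ n)⁻¹ * (Real.sqrt 2 ^ n)⁻¹ = (2 ^ n : ℝ)⁻¹ := by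
  rw [← mul_inv, ← mul_pow, Real.mul_self_sqrt zero_le_two]

theorem sum_neg_one_pow_dotProduct {ι : Type*} [Fintype ι] [DecidableEq ι] (v : ι → ZMod 2) :
    ∑ x : ι → ZMod 2, (-1 : ℝ) ^ (v ⬝ᵥ x).val = if v = 0 then 2 ^ Fintype.card ι else 0 := by
  split_ifs with hv
  · simp [hv, Finset.card_univ, ZMod.card]
  obtain ⟨i, hi⟩ := Function.ne_iff.mp hv
  have hvi : v i = 1 := by
    rw [Pi.zero_apply] at hi; revert hi; generalize v i = a; revert a; decide
  -- translating by the basis vector `e i` flips every sign, so the sum equals its negative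
  have hflip : ∀ x : ι → ZMod 2,
      (-1 : ℝ) ^ (v ⬝ᵥ (x + Pi.single i 1)).val = -(-1) ^ (v ⬝ᵥ x).val := fun x => by
    rw [dotProduct_add, dotProduct_single, hvi, mul_one, ZMod.neg_one_pow_val_add, ZMod.val_one,
      pow_one, mul_neg_one]
  have hsum := Fintype.sum_equiv (Equiv.addRight (Pi.single i 1))
    (fun x => (-1 : ℝ) ^ (v ⬝ᵥ (x + Pi.single i 1)).val) (fun x => (-1 : ℝ) ^ (v ⬝ᵥ x).val)
    (fun _ => by rw [Equiv.coe_addRight])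
  simp only [hflip, Finset.sum_neg_distrib] at hsum
  linarith

section Hadamard

variable {n : ℕ}

lemma hadamard_comp_add_right (v : (Fin n → ZMod 2) → ℝ) (s : Fin n → ZMod 2) :
    hadamard (fun x => v (x + s)) = fun w => (-1 : ℝ) ^ (w ⬝ᵥ s).val * hadamard v w := by
  funext w
  have hsum := Fintype.sum_equiv (Equiv.addRight s)
    (fun x => (-1 : ℝ) ^ (w ⬝ᵥ x).val * v (x + s))
    (fun y => (-1 : ℝ) ^ (w ⬝ᵥ (y + s)).val * v y)
    (fun x => by simp [add_assoc, ZModModule.add_self])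
  simp only [_root_.hadamard, hsum, dotProduct_add, ZMod.neg_one_pow_val_add, Finset.mul_sum]
  refine Finset.sum_congr rfl fun y _ => ?_
  ring

lemma hadamard_neg_one_pow (f : (Fin n → ZMod 2) → ZMod 2) :
    hadamard (fun x => (Real.sqrt 2 ^ n)⁻¹ * (-1 : ℝ) ^ (f x).val) = fhat f := by
  funext w
  simp only [_root_.hadamard, fhat, ← inv_sqrt_two_pow_mul_self, ZMod.neg_one_pow_val_add,
    Finset.mul_sum]
  refine Finset.sum_congr rfl fun x _ => ?_
  ring

lemma hadamard_neg_one_pow_dotProduct (s : Fin n → ZMod 2) :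
    hadamard (fun w => (Real.sqrt 2 ^ n)⁻¹ * (-1 : ℝ) ^ (w ⬝ᵥ s).val)
      = fun x => if x = s then 1 else 0 := by
  funext x
  have hchar : ∀ w : Fin n → ZMod 2, (-1 : ℝ) ^ (x ⬝ᵥ w).val
      * ((Real.sqrt 2 ^ n)⁻¹ * (-1) ^ (w ⬝ᵥ s).val)
      = (Real.sqrt 2 ^ n)⁻¹ * (-1) ^ ((x + s) ⬝ᵥ w).val := fun w => by
    rw [add_dotProduct, ZMod.neg_one_pow_val_add, dotProduct_comm s w]
    ring
  simp only [_root_.hadamard, hchar, ← Finset.mul_sum, ← mul_assoc, inv_sqrt_two_pow_mul_self,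
    sum_neg_one_pow_dotProduct, Fintype.card_fin, ← ZModModule.sub_eq_add, sub_eq_zero]
  split_ifs <;> simp

end Hadamard

lemma neg_one_pow_dual_mul_fhat {n : ℕ} {f ft : (Fin n → ZMod 2) → ZMod 2} {w : Fin n → ZMod 2}
    (hdual : (-1 : ℝ) ^ (ft w).val = Real.sqrt 2 ^ n * fhat f w) :
    (-1 : ℝ) ^ (ft w).val * fhat f w = (Real.sqrt 2 ^ n)⁻¹ := by
  have hpos : 0 < Real.sqrt 2 ^ n := by positivity
  have hfhat : fhat f w = (Real.sqrt 2 ^ n)⁻¹ * (-1) ^ (ft w).val := by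
    rw [hdual, inv_mul_cancel_left₀ hpos.ne']
  rw [hfhat, mul_left_comm, neg_one_pow_mul_neg_one_pow_self, mul_one]

theorem hidden_shift_bent_general (n : ℕ) (f ft : (Fin n → ZMod 2) → ZMod 2)
    (hdual : ∀ w, (-1 : ℝ) ^ ((ft w).val) = Real.sqrt 2 ^ n * fhat f w)
    (s : Fin n → ZMod 2) :
    ∃ c : ℝ, (c = 1 ∨ c = -1) ∧
      hadamard (phaseOp ft (hadamard
          (fun x => (Real.sqrt 2 ^ n)⁻¹ * (-1 : ℝ) ^ ((f (x + s)).val))))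
        = fun x => if x = s then c else 0 := by
  have hshifted : hadamard (fun x => (Real.sqrt 2 ^ n)⁻¹ * (-1 : ℝ) ^ (f (x + s)).val)
      = fun w => (-1 : ℝ) ^ (w ⬝ᵥ s).val * fhat f w :=
    (hadamard_comp_add_right (fun x => (Real.sqrt 2 ^ n)⁻¹ * (-1 : ℝ) ^ (f x).val) s).trans
      (by rw [hadamard_neg_one_pow])
  have hphased : phaseOp ft (fun w => (-1 : ℝ) ^ (w ⬝ᵥ s).val * fhat f w)
      = fun w => (Real.sqrt 2 ^ n)⁻¹ * (-1 : ℝ) ^ (w ⬝ᵥ s).val := by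
    funext w
    rw [phaseOp, mul_left_comm, neg_one_pow_dual_mul_fhat (hdual w), mul_comm]
  exact ⟨1, Or.inl rfl, by rw [hshifted, hphased, hadamard_neg_one_pow_dotProduct]⟩

/-- Correctness of the standard hidden shift algorithm for bent functions:
applying `H^{⊗n} D_{f̃} H^{⊗n}` to `|ψ_g⟩ = 2^(-n/2) Σ_x (-1)^(f(x+s)) |x⟩`
yields `±|s⟩`. -/
theorem hidden_shift_bent (n : ℕ) (f ft : (Fin n → ZMod 2) → ZMod 2)
    (hbent : ∀ w, |fhat f w| = (Real.sqrt 2 ^ n)⁻¹)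
    (hdual : ∀ w, (-1 : ℝ) ^ ((ft w).val) = Real.sqrt 2 ^ n * fhat f w)
    (s : Fin n → ZMod 2) :
    ∃ c : ℝ, (c = 1 ∨ c = -1) ∧
      hadamard (phaseOp ft (hadamard
          (fun x => (Real.sqrt 2 ^ n)⁻¹ * (-1 : ℝ) ^ ((f (x + s)).val))))
        = fun x => if x = s then c else 0 :=
  hidden_shift_bent_general n f ft hdual s
end
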